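/- For any complex number a and τ tending to 0 along the positive imaginary axis, ϑ₀₁(τ, aτ) is asymptotic to (−iτ)^{−1/2} · 2cos(aπ) · e^{−πi/(4τ)}; that is, the ratio tends to 1 as τ ↓ 0. -/

import Mathlib

/-!
With Mathlib's `jacobiTheta₂`, `θ₀₁(τ, z) = θ(z + 1/2, τ)`, and the modular transformation
turns `θ₀₁(iT, aiT)` into `T^{-1/2} e^{-πi/(4iT)} e^{πa²T - πia} θ(a - i/(2T), i/T)`.
The `n`-th term of the last series is `e^{2πina} e^{-πn(n-1)/T}`; these terms decrease in
`1/T`, so by dominated convergence only `n = 0, 1` survive as `T ↓ 0`, leaving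
`1 + e^{2πia}`, and `e^{-πia} (1 + e^{2πia}) = 2 cos(πa)`.
-/

open Real Complex Filter Topology

noncomputable section

noncomputable def theta00 (τ z : ℂ) : ℂ :=
  ∑' n : ℤ, Complex.exp (2*(π:ℂ)*Complex.I*(n:ℂ)*z) *
    Complex.exp (2*(π:ℂ)*Complex.I*τ*((n:ℂ)^2/2))

noncomputable def theta01 (τ z : ℂ) : ℂ :=
  ∑' n : ℤ, (-1:ℂ)^n * Complex.exp (2*(π:ℂ)*Complex.I*(n:ℂ)*z) *
    Complex.exp (2*(π:ℂ)*Complex.I*τ*((n:ℂ)^2/2))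

noncomputable def theta10 (τ z : ℂ) : ℂ :=
  ∑' n : ℤ, Complex.exp (2*(π:ℂ)*Complex.I*((n:ℂ)+1/2)*z) *
    Complex.exp (2*(π:ℂ)*Complex.I*τ*((1/2)*((n:ℂ)+1/2)^2))

noncomputable def theta11 (τ z : ℂ) : ℂ :=
  Complex.I * ∑' n : ℤ, (-1:ℂ)^n * Complex.exp (2*(π:ℂ)*Complex.I*((n:ℂ)+1/2)*z) *
    Complex.exp (2*(π:ℂ)*Complex.I*τ*((1/2)*((n:ℂ)+1/2)^2))

lemma theta01_eq_jacobiTheta₂ (τ z : ℂ) : theta01 τ z = jacobiTheta₂ (z + 1 / 2) τ := by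
  refine tsum_congr fun n => ?_
  rw [jacobiTheta₂_term,
    show 2 * π * I * n * (z + 1 / 2) + π * I * n ^ 2 * τ
      = n * (π * I) + (2 * π * I * n * z + 2 * π * I * τ * (n ^ 2 / 2)) by ring,
    Complex.exp_add, exp_int_mul, exp_pi_mul_I, Complex.exp_add]
  ring

lemma Int.mul_sub_one_nonneg (n : ℤ) : 0 ≤ n * (n - 1) := by
  nlinarith [Int.le_self_sq n]

lemma jacobiTheta₂_term_sub_I_mul_half (n : ℤ) (a : ℂ) (t : ℝ) :
    jacobiTheta₂_term n (a - I * t / 2) (I * t) =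
      cexp (2 * π * I * n * a) * rexp (-π * (n * (n - 1)) * t) := by
  rw [jacobiTheta₂_term, ofReal_exp, ← Complex.exp_add]
  congr 1
  push_cast
  ring_nf
  rw [I_sq]
  ring

lemma antitone_norm_jacobiTheta₂_term_sub_I_mul_half (n : ℤ) (a : ℂ) :
    Antitone fun t : ℝ => ‖jacobiTheta₂_term n (a - I * t / 2) (I * t)‖ := by
  intro s t hst
  have hn : (0 : ℝ) ≤ n * (n - 1) := by exact_mod_cast Int.mul_sub_one_nonneg n
  simp only [jacobiTheta₂_term_sub_I_mul_half, norm_mul, norm_real, Real.norm_eq_abs,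
    Real.abs_exp]
  gcongr ‖_‖ * rexp ?_
  exact mul_le_mul_of_nonpos_left hst (by nlinarith [Real.pi_pos])

lemma tendsto_jacobiTheta₂_term_sub_I_mul_half (n : ℤ) (a : ℂ) :
    Tendsto (fun t : ℝ => jacobiTheta₂_term n (a - I * t / 2) (I * t)) atTop
      (𝓝 (if n * (n - 1) = 0 then cexp (2 * π * I * n * a) else 0)) := by
  simp only [jacobiTheta₂_term_sub_I_mul_half]
  split_ifs with hn
  · have hn' : (n : ℝ) * (n - 1) = 0 := by exact_mod_cast hn
    simp [hn']
  · have hn' : (0 : ℝ) < n * (n - 1) := by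
      exact_mod_cast lt_of_le_of_ne (Int.mul_sub_one_nonneg n) (Ne.symm hn)
    have hexp : Tendsto (fun t : ℝ => rexp (-π * (n * (n - 1)) * t)) atTop (𝓝 0) :=
      Real.tendsto_exp_atBot.comp
        (tendsto_id.const_mul_atTop_of_neg (by nlinarith [Real.pi_pos]))
    simpa using ((continuous_ofReal.tendsto 0).comp hexp).const_mul (cexp (2 * π * I * n * a))

lemma tsum_ite_mul_sub_one_eq_zero (f : ℤ → ℂ) :
    ∑' n : ℤ, (if n * (n - 1) = 0 then f n else 0) = f 0 + f 1 := by
  rw [tsum_eq_sum (s := {0, 1}), Finset.sum_pair zero_ne_one]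
  · simp
  · intro n hn
    rw [if_neg]
    simp only [Finset.mem_insert, Finset.mem_singleton, not_or] at hn
    exact mul_ne_zero hn.1 (sub_ne_zero.mpr hn.2)

lemma tendsto_jacobiTheta₂_sub_I_mul_half (a : ℂ) :
    Tendsto (fun t : ℝ => jacobiTheta₂ (a - I * t / 2) (I * t)) atTop
      (𝓝 (1 + cexp (2 * π * I * a))) := by
  have hlim := tsum_ite_mul_sub_one_eq_zero fun n : ℤ => cexp (2 * π * I * n * a)
  push_cast at hlim
  rw [mul_zero, zero_mul, Complex.exp_zero, mul_one] at hlim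
  rw [← hlim]
  refine tendsto_tsum_of_dominated_convergence
    (bound := fun n => ‖jacobiTheta₂_term n (a - I * (1 : ℝ) / 2) (I * (1 : ℝ))‖) ?_
    (fun n => tendsto_jacobiTheta₂_term_sub_I_mul_half n a) ?_
  · exact summable_norm_iff.mpr ((summable_jacobiTheta₂_term_iff _ _).mpr (by simp))
  · filter_upwards [eventually_ge_atTop 1] with t ht n
    exact antitone_norm_jacobiTheta₂_term_sub_I_mul_half n a ht

lemma theta01_I_mul_eq (a : ℂ) {T : ℝ} (hT : T ≠ 0) :
    theta01 (I * T) (a * (I * T)) =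
      (-I * (I * T)) ^ (-(1 / 2) : ℂ) * cexp (-(π * I) / (4 * (I * T))) *
        (cexp (π * a ^ 2 * T - π * I * a) *
          jacobiTheta₂ (a - I * (T⁻¹ : ℝ) / 2) (I * (T⁻¹ : ℝ))) := by
  have hT' : (T : ℂ) ≠ 0 := ofReal_ne_zero.mpr hT
  have hexp : cexp (-π * I * (a * (I * T) + 1 / 2) ^ 2 / (I * T)) =
      cexp (-(π * I) / (4 * (I * T))) * cexp (π * a ^ 2 * T - π * I * a) := by
    rw [← Complex.exp_add]
    congr 1
    field_simp
    ring_nf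
    rw [I_sq]
    ring
  have harg : (a * (I * T) + 1 / 2) / (I * T) = a - I * (T⁻¹ : ℝ) / 2 := by
    push_cast
    field_simp
    ring_nf
    rw [I_sq]
    ring
  have hmod : -1 / (I * T) = I * (T⁻¹ : ℝ) := by
    push_cast
    field_simp
    ring_nf
    rw [I_sq]
  rw [theta01_eq_jacobiTheta₂, jacobiTheta₂_functional_equation, hexp, harg, hmod, cpow_neg,
    one_div]
  ring

lemma cos_mul_pi_ne_zero {a : ℂ} (ha : ∀ k : ℤ, a ≠ 1 / 2 + k) : cos (a * π) ≠ 0 := by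
  rw [Ne, Complex.cos_eq_zero_iff]
  rintro ⟨k, hk⟩
  apply ha k
  have hπ : (π : ℂ) ≠ 0 := ofReal_ne_zero.mpr pi_ne_zero
  field_simp at hk
  linear_combination hk / 2

theorem stmt17 (a : ℂ) (ha : ∀ k : ℤ, a ≠ 1/2 + (k:ℂ)) :
    Filter.Tendsto (fun T : ℝ =>
        theta01 (Complex.I*T) (a*(Complex.I*T)) /
          ((-Complex.I*(Complex.I*(T:ℂ))) ^ (-(1/2) : ℂ) * (2 * Complex.cos (a*(π:ℂ))) *
            Complex.exp (-((π:ℂ)*Complex.I)/(4*(Complex.I*(T:ℂ))))))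
      (nhdsWithin 0 (Set.Ioi 0)) (nhds 1) := by
  have hcos : 2 * cos (a * π) ≠ 0 := mul_ne_zero two_ne_zero (cos_mul_pi_ne_zero ha)
  have hexp : Tendsto (fun T : ℝ => cexp (π * a ^ 2 * T - π * I * a)) (𝓝[>] 0)
      (𝓝 (cexp (-π * I * a))) := by
    have : Continuous fun T : ℝ => cexp (π * a ^ 2 * T - π * I * a) := by fun_prop
    simpa using (this.tendsto 0).mono_left nhdsWithin_le_nhds
  have htheta := (tendsto_jacobiTheta₂_sub_I_mul_half a).comp tendsto_inv_nhdsGT_zero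
  have hcos_eq : cexp (-π * I * a) * (1 + cexp (2 * π * I * a)) = 2 * cos (a * π) := by
    rw [Complex.cos, mul_add, mul_one, ← Complex.exp_add]
    ring_nf
  have hlim := (hexp.mul htheta).div_const (2 * cos (a * π))
  rw [hcos_eq, div_self hcos] at hlim
  refine hlim.congr' ?_
  filter_upwards [self_mem_nhdsWithin] with T (hT : 0 < T)
  have hpow : (-I * (I * T)) ^ (-(1 / 2) : ℂ) ≠ 0 := by simp [cpow_eq_zero_iff, hT.ne']
  rw [Function.comp_apply, theta01_I_mul_eq a hT.ne', mul_right_comm _ (2 * cos (a * π)),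
    mul_div_mul_left _ _ (mul_ne_zero hpow (Complex.exp_ne_zero _))]

end
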